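/- Fix 1/2 < s0 < 1 and λ0 > 0 such that s0 + κ(s0)/λ0 < 1. Then there exists ε0 > 0 such that for every probability vector p with decreasing entries and finite entropy h(μ_p) = −Σ_n p_n log p_n < ∞, if p_1 ≤ ψ and min(p_1, p_2) ≤ ε0, then dim μ_p ≤ s0 + κ(s0)/λ0. -/

import Mathlib

open MeasureTheory Filter Set
open scoped ENNReal

instance : MeasurableSpace ℕ+ := ⊤

/-- The Gauss map `T x = 1/x - ⌊1/x⌋` (with `T 0 = 0`). -/
noncomputable def gaussMap (x : ℝ) : ℝ := if x = 0 then 0 else Int.fract x⁻¹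

/-- Finite continued fraction approximants: `cfApprox n a` is the value of the
continued fraction `1/(a 0 + 1/(a 1 + ⋯))` truncated after `n` levels. -/
noncomputable def cfApprox : ℕ → (ℕ → ℕ+) → ℝ
  | 0, _ => 0
  | n + 1, a => (((a 0 : ℕ) : ℝ) + cfApprox n (fun k => a (k + 1)))⁻¹

/-- The continued fraction coding map `Π : ℕ^ℕ → [0,1] ∖ ℚ`. -/
noncomputable def cfVal (a : ℕ → ℕ+) : ℝ := limUnder atTop (fun n => cfApprox n a)

/-- `p` is a countable probability vector `(p_n)_{n ≥ 1}`. -/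
def IsProbVec (p : ℕ+ → ℝ) : Prop := (∀ n, 0 ≤ p n) ∧ HasSum p 1

/-- `m` is the Bernoulli product measure on `ℕ^ℕ` with weights `p`:
it assigns to each cylinder the product of the weights of its digits. -/
def IsBernoulli (p : ℕ+ → ℝ) (m : Measure (ℕ → ℕ+)) : Prop :=
  ∀ (n : ℕ) (i : ℕ → ℕ+),
    m {a | ∀ k < n, a k = i k} = ENNReal.ofReal (∏ k ∈ Finset.range n, p (i k))

/-- Hausdorff dimension of a measure: `inf { dim_H A : μ A = 1 }`. -/
noncomputable def dimMeasure (μ : Measure ℝ) : ℝ≥0∞ :=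
  ⨅ (A : Set ℝ) (_ : μ A = 1), dimH A


/-- `ψ = |T'(z₁)|^{-1/4} = z₁^{1/2}`, where `z₁ = (√5 - 1)/2` is the fixed point of the
Gauss map with continued fraction expansion `(1,1,1,…)`. -/
noncomputable def psi : ℝ := Real.sqrt ((Real.sqrt 5 - 1) / 2)

/-- `κ(s) = log ( sup_{x ∈ (0,1)} ∑_{n ≥ 1} (x+n)^{-2s} )`. -/
noncomputable def kappa (s : ℝ) : ℝ :=
  Real.log (sSup {y : ℝ | ∃ x ∈ Set.Ioo (0 : ℝ) 1,
    y = ∑' n : ℕ+, ((x + ((n : ℕ) : ℝ)) ^ (2 * s))⁻¹})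

/-!
Under `μ_p` the digits are i.i.d. with law `p`, so by the strong law of large numbers the
truncated Lyapunov averages `(1/n) ∑_{k<n} min (2 log a_k, 2 log M)` converge almost surely to
their mean. Since `p` is decreasing, `p₁ ≤ ψ` and `p₂ ≤ ε₀`, the digits `≤ M` carry mass at most
`ψ + M ε₀`, so for `M` large and `ε₀ = (1 - ψ)/(2M)` the mean exceeds `λ₀`. Hence almost every
digit sequence eventually satisfies `(a₀ ⋯ a_{n-1})² ≥ e^{λ₀ n}`.

Such sequences are covered, for each large `n`, by the level-`n` cylinders meeting the set; the
image of a cylinder has diameter at most `(a₀ ⋯ a_{n-1})⁻² ≤ e^{-λ₀ n}`. For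
`s > s₀ + κ(s₀)/λ₀` the `s`-dimensional cover sum is therefore at most
`e^{-λ₀ n (s - s₀)} ζ(2s₀)ⁿ ≤ (e^{κ(s₀) - λ₀ (s - s₀)})ⁿ → 0`, using `ζ(2s₀) ≤ e^{κ(s₀)}`
(let `x → 0` in the supremum defining `κ`).
-/

open ProbabilityTheory
open scoped Topology

noncomputable def cfTail : ℕ → (ℕ → ℕ+) → ℝ → ℝ
  | 0, _, t => t
  | n + 1, a, t => (((a 0 : ℕ) : ℝ) + cfTail n (fun k => a (k + 1)) t)⁻¹

lemma one_le_coe_pnat (c : ℕ+) : (1 : ℝ) ≤ ((c : ℕ) : ℝ) := by exact_mod_cast c.pos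

lemma cfApprox_eq_cfTail : ∀ (n : ℕ) (a : ℕ → ℕ+), cfApprox n a = cfTail n a 0
  | 0, _ => rfl
  | n + 1, a => by simp only [cfApprox, cfTail, cfApprox_eq_cfTail n]

lemma cfTail_add : ∀ (n m : ℕ) (a : ℕ → ℕ+) (t : ℝ),
    cfTail (n + m) a t = cfTail n a (cfTail m (fun k => a (k + n)) t)
  | 0, m, a, t => by simp [cfTail]
  | n + 1, m, a, t => by
    rw [Nat.add_right_comm]
    simp only [cfTail, cfTail_add n m (fun k => a (k + 1)) t, Nat.add_assoc]

lemma cfTail_congr : ∀ {n : ℕ} {a b : ℕ → ℕ+}, (∀ k < n, a k = b k) →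
    ∀ t, cfTail n a t = cfTail n b t
  | 0, _, _, _, _ => rfl
  | n + 1, a, b, h, t => by
    simp only [cfTail, h 0 n.succ_pos,
      cfTail_congr (n := n) (a := fun k => a (k + 1)) (b := fun k => b (k + 1))
        (fun k hk => h _ (by omega))]

lemma cfTail_nonneg : ∀ (n : ℕ) (a : ℕ → ℕ+) {t : ℝ}, 0 ≤ t → 0 ≤ cfTail n a t
  | 0, _, _, ht => ht
  | n + 1, a, _, ht => by
    have := cfTail_nonneg n (fun k => a (k + 1)) ht
    simp only [cfTail]
    positivity

lemma cfTail_mem_Icc (n : ℕ) (a : ℕ → ℕ+) {t : ℝ} (ht : t ∈ Icc 0 1) :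
    cfTail n a t ∈ Icc 0 1 := by
  cases n with
  | zero => exact ht
  | succ n =>
    refine ⟨cfTail_nonneg _ a ht.1, inv_le_one_of_one_le₀ ?_⟩
    linarith [one_le_coe_pnat (a 0), cfTail_nonneg n (fun k => a (k + 1)) ht.1]

lemma abs_inv_add_sub_inv_add {c x y : ℝ} (hx : 0 < c + x) (hy : 0 < c + y) :
    |(c + x)⁻¹ - (c + y)⁻¹| = |x - y| / ((c + x) * (c + y)) := by
  rw [inv_sub_inv hx.ne' hy.ne', abs_div, abs_of_pos (mul_pos hx hy), abs_sub_comm]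
  ring_nf

lemma abs_cfTail_sub_le : ∀ (n : ℕ) (a : ℕ → ℕ+) {t t' : ℝ}, 0 ≤ t → 0 ≤ t' →
    |cfTail n a t - cfTail n a t'| ≤
      ((∏ k ∈ Finset.range n, ((a k : ℕ) : ℝ)) ^ 2)⁻¹ * |t - t'|
  | 0, _, _, _, _, _ => by simp [cfTail]
  | n + 1, a, t, t', ht, ht' => by
    set c : ℝ := ((a 0 : ℕ) : ℝ)
    set x := cfTail n (fun k => a (k + 1)) t
    set y := cfTail n (fun k => a (k + 1)) t'
    have hc : 1 ≤ c := one_le_coe_pnat _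
    have hx : 0 ≤ x := cfTail_nonneg _ _ ht
    have hy : 0 ≤ y := cfTail_nonneg _ _ ht'
    have ih := abs_cfTail_sub_le n (fun k => a (k + 1)) ht ht'
    calc |cfTail (n + 1) a t - cfTail (n + 1) a t'|
        = |x - y| / ((c + x) * (c + y)) := abs_inv_add_sub_inv_add (by linarith) (by linarith)
      _ ≤ |x - y| / c ^ 2 := by gcongr; nlinarith
      _ ≤ _ := by
        rw [Finset.prod_range_succ', mul_pow, mul_inv, mul_comm _ (c ^ 2)⁻¹, mul_assoc,
          div_eq_inv_mul]
        gcongr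

-- One step need not contract (for `a₀ = 1` its derivative at `t = 0` is `-1`); two steps do.
lemma abs_cfTail_two_sub_le (a : ℕ → ℕ+) {t t' : ℝ} (ht : 0 ≤ t) (ht' : 0 ≤ t') :
    |cfTail 2 a t - cfTail 2 a t'| ≤ |t - t'| / 4 := by
  set c₀ : ℝ := ((a 0 : ℕ) : ℝ)
  set c₁ : ℝ := ((a 1 : ℕ) : ℝ)
  have h₀ : 1 ≤ c₀ := one_le_coe_pnat _
  have h₁ : 1 ≤ c₁ := one_le_coe_pnat _
  set u := (c₁ + t)⁻¹
  set u' := (c₁ + t')⁻¹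
  have hu : u * (c₁ + t) = 1 := inv_mul_cancel₀ (by positivity)
  have hu' : u' * (c₁ + t') = 1 := inv_mul_cancel₀ (by positivity)
  have hu0 : 0 < u := by positivity
  have hu0' : 0 < u' := by positivity
  have e : cfTail 2 a t = (c₀ + u)⁻¹ := rfl
  have e' : cfTail 2 a t' = (c₀ + u')⁻¹ := rfl
  -- `(c₁ + t)(c₀ + u) = c₀ (c₁ + t) + 1 ≥ 2`, and likewise for `t'`
  have hD : 4 ≤ ((c₁ + t) * (c₀ + u)) * ((c₁ + t') * (c₀ + u')) := by
    have k : 2 ≤ (c₁ + t) * (c₀ + u) := by nlinarith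
    have k' : 2 ≤ (c₁ + t') * (c₀ + u') := by nlinarith
    nlinarith
  rw [e, e']
  calc |(c₀ + u)⁻¹ - (c₀ + u')⁻¹|
      = |u - u'| / ((c₀ + u) * (c₀ + u')) := abs_inv_add_sub_inv_add (by linarith) (by linarith)
    _ = |t - t'| / (((c₁ + t) * (c₀ + u)) * ((c₁ + t') * (c₀ + u'))) := by
      rw [abs_inv_add_sub_inv_add (by linarith) (by linarith), div_div]
      ring_nf
    _ ≤ |t - t'| / 4 := by gcongr

lemma abs_cfTail_sub_le_pow (n : ℕ) (a : ℕ → ℕ+) {t t' : ℝ} (ht : t ∈ Icc 0 1)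
    (ht' : t' ∈ Icc 0 1) : |cfTail n a t - cfTail n a t'| ≤ (1 / 4 : ℝ) ^ (n / 2) := by
  induction n using Nat.strong_induction_on generalizing a with
  | _ n ih =>
    rcases lt_or_ge n 2 with hn | hn
    · rw [Nat.div_eq_of_lt hn, pow_zero, abs_le]
      have hx := cfTail_mem_Icc n a ht
      have hy := cfTail_mem_Icc n a ht'
      constructor <;> linarith [hx.1, hx.2, hy.1, hy.2]
    · obtain ⟨m, rfl⟩ : ∃ m, n = 2 + m := ⟨n - 2, by omega⟩
      rw [cfTail_add, cfTail_add]
      calc _ ≤ |cfTail m _ t - cfTail m _ t'| / 4 :=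
            abs_cfTail_two_sub_le a (cfTail_nonneg _ _ ht.1) (cfTail_nonneg _ _ ht'.1)
        _ ≤ (1 / 4 : ℝ) ^ (m / 2) / 4 := by gcongr; exact ih m (by omega) _
        _ = (1 / 4 : ℝ) ^ ((2 + m) / 2) := by
          rw [show (2 + m) / 2 = m / 2 + 1 by omega, pow_succ]; ring

lemma cfApprox_mem_Icc (n : ℕ) (a : ℕ → ℕ+) : cfApprox n a ∈ Icc 0 1 := by
  rw [cfApprox_eq_cfTail]
  exact cfTail_mem_Icc n a ⟨le_rfl, zero_le_one⟩

lemma cfApprox_add (n m : ℕ) (a : ℕ → ℕ+) :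
    cfApprox (n + m) a = cfTail n a (cfApprox m fun k => a (k + n)) := by
  rw [cfApprox_eq_cfTail, cfApprox_eq_cfTail, cfTail_add]

lemma cauchySeq_cfApprox (a : ℕ → ℕ+) : CauchySeq fun n => cfApprox n a := by
  have hdist : ∀ N n, N ≤ n → dist (cfApprox n a) (cfApprox N a) ≤ (1 / 4 : ℝ) ^ (N / 2) := by
    intro N n hNn
    obtain ⟨m, rfl⟩ := Nat.exists_eq_add_of_le hNn
    rw [Real.dist_eq, cfApprox_add, cfApprox_eq_cfTail N]
    exact abs_cfTail_sub_le_pow N a (cfApprox_mem_Icc _ _) ⟨le_rfl, zero_le_one⟩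
  refine cauchySeq_of_le_tendsto_0 (fun N => 2 * (1 / 4 : ℝ) ^ (N / 2)) (fun n m N hn hm => ?_) ?_
  · calc dist (cfApprox n a) (cfApprox m a)
        ≤ dist (cfApprox n a) (cfApprox N a) + dist (cfApprox m a) (cfApprox N a) :=
          dist_triangle_right _ _ _
      _ ≤ 2 * (1 / 4 : ℝ) ^ (N / 2) := by linarith [hdist N n hn, hdist N m hm]
  · have h4 := tendsto_pow_atTop_nhds_zero_of_lt_one (r := (1 / 4 : ℝ)) (by norm_num) (by norm_num)
    simpa using (h4.comp (Nat.tendsto_div_const_atTop two_ne_zero)).const_mul 2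

lemma tendsto_cfApprox (a : ℕ → ℕ+) : Tendsto (fun n => cfApprox n a) atTop (𝓝 (cfVal a)) :=
  (cauchySeq_cfApprox a).tendsto_limUnder

lemma measurable_cfApprox : ∀ n : ℕ, Measurable (cfApprox n)
  | 0 => measurable_const
  | n + 1 => by
    have h0 : Measurable fun a : ℕ → ℕ+ => ((a 0 : ℕ) : ℝ) :=
      (measurable_from_top (f := fun c : ℕ+ => ((c : ℕ) : ℝ))).comp (measurable_pi_apply 0)
    have hs : Measurable fun a : ℕ → ℕ+ => cfApprox n fun k => a (k + 1) :=
      (measurable_cfApprox n).comp (measurable_pi_lambda _ fun k => measurable_pi_apply (k + 1))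
    exact (h0.add hs).inv

lemma measurable_cfVal : Measurable cfVal :=
  measurable_of_tendsto_metrizable measurable_cfApprox (tendsto_pi_nhds.2 tendsto_cfApprox)

lemma abs_cfVal_sub_le {n : ℕ} {a b : ℕ → ℕ+} (h : ∀ k < n, a k = b k) :
    |cfVal a - cfVal b| ≤ ((∏ k ∈ Finset.range n, ((a k : ℕ) : ℝ)) ^ 2)⁻¹ := by
  have hlim := ((tendsto_cfApprox a).sub (tendsto_cfApprox b)).abs.comp
    (tendsto_add_atTop_nat n)
  refine le_of_tendsto' hlim fun m => ?_
  have hx := cfApprox_mem_Icc m fun k => a (k + n)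
  have hy := cfApprox_mem_Icc m fun k => b (k + n)
  simp only [Function.comp, add_comm m n, cfApprox_add]
  rw [← cfTail_congr h (cfApprox m fun k => b (k + n))]
  calc _ ≤ ((∏ k ∈ Finset.range n, ((a k : ℕ) : ℝ)) ^ 2)⁻¹ * |cfApprox m (fun k => a (k + n))
        - cfApprox m fun k => b (k + n)| := abs_cfTail_sub_le n a hx.1 hy.1
    _ ≤ _ := by
      refine mul_le_of_le_one_right (by positivity) (abs_le.2 ⟨?_, ?_⟩) <;>
        linarith [hx.1, hx.2, hy.1, hy.2]

section Kappa

variable {s : ℝ}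

lemma summable_inv_rpow_pnat (hs : 1 / 2 < s) :
    Summable fun n : ℕ+ => ((((n : ℕ) : ℝ)) ^ (2 * s))⁻¹ :=
  (Real.summable_nat_rpow_inv.2 (by linarith)).comp_injective PNat.coe_injective

lemma summable_inv_add_rpow (hs : 1 / 2 < s) {x : ℝ} (hx : 0 ≤ x) :
    Summable fun n : ℕ+ => ((x + ((n : ℕ) : ℝ)) ^ (2 * s))⁻¹ := by
  refine (summable_inv_rpow_pnat hs).of_nonneg_of_le (fun n => by positivity) fun n => ?_
  gcongr
  linarith

lemma tsum_inv_rpow_le_sSup (hs : 1 / 2 < s) :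
    ∑' n : ℕ+, ((((n : ℕ) : ℝ)) ^ (2 * s))⁻¹ ≤ sSup {y : ℝ | ∃ x ∈ Set.Ioo (0 : ℝ) 1,
      y = ∑' n : ℕ+, ((x + ((n : ℕ) : ℝ)) ^ (2 * s))⁻¹} := by
  set F : ℝ → ℝ := fun x => ∑' n : ℕ+, ((x + ((n : ℕ) : ℝ)) ^ (2 * s))⁻¹
  have hmono : ∀ x, 0 ≤ x → F x ≤ F 0 := fun x hx =>
    (summable_inv_add_rpow hs hx).tsum_le_tsum
      (fun n => by simp only [zero_add]; gcongr; linarith)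
      (summable_inv_add_rpow hs le_rfl)
  have hF : Tendsto F (𝓝[>] 0) (𝓝 (F 0)) := by
    refine tendsto_tsum_of_dominated_convergence (summable_inv_add_rpow hs le_rfl)
      (fun n => ?_) (eventually_nhdsWithin_of_forall fun x (hx : 0 < x) n => ?_)
    · refine ((ContinuousAt.inv₀ ?_ ?_).tendsto).mono_left nhdsWithin_le_nhds
      · exact (continuous_add_const _).continuousAt.rpow_const (Or.inl (by simp))
      · simp only [zero_add]; positivity
    · rw [Real.norm_of_nonneg (by positivity)]
      gcongr
  refine le_of_tendsto (by simpa [F] using hF) ?_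
  filter_upwards [Ioo_mem_nhdsGT (zero_lt_one' ℝ)] with x hx
  exact le_csSup ⟨F 0, by rintro _ ⟨y, hy, rfl⟩; exact hmono y hy.1.le⟩ ⟨x, hx, rfl⟩

lemma one_le_tsum_inv_rpow (hs : 1 / 2 < s) :
    1 ≤ ∑' n : ℕ+, ((((n : ℕ) : ℝ)) ^ (2 * s))⁻¹ := by
  simpa using (summable_inv_rpow_pnat hs).le_tsum 1 fun n _ => by positivity

lemma tsum_inv_rpow_le_exp_kappa (hs : 1 / 2 < s) :
    ∑' n : ℕ+, ((((n : ℕ) : ℝ)) ^ (2 * s))⁻¹ ≤ Real.exp (kappa s) := by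
  rw [kappa, Real.exp_log (by linarith [one_le_tsum_inv_rpow hs, tsum_inv_rpow_le_sSup hs])]
  exact tsum_inv_rpow_le_sSup hs

lemma kappa_nonneg (hs : 1 / 2 < s) : 0 ≤ kappa s :=
  Real.log_nonneg ((one_le_tsum_inv_rpow hs).trans (tsum_inv_rpow_le_sSup hs))

end Kappa

def cfCylinder (n : ℕ) (w : Fin n → ℕ+) : Set (ℕ → ℕ+) := {a | ∀ k : Fin n, a k = w k}

lemma prod_range_eq_of_mem_cfCylinder {n : ℕ} {w : Fin n → ℕ+} {a : ℕ → ℕ+}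
    (ha : a ∈ cfCylinder n w) :
    ∏ k ∈ Finset.range n, ((a k : ℕ) : ℝ) = ∏ k, ((w k : ℕ) : ℝ) := by
  rw [← Fin.prod_univ_eq_prod_range fun k => ((a k : ℕ) : ℝ)]
  exact Finset.prod_congr rfl fun k _ => by rw [ha k]

lemma ediam_image_cfCylinder_le (n : ℕ) (w : Fin n → ℕ+) :
    Metric.ediam (cfVal '' cfCylinder n w) ≤ ENNReal.ofReal ((∏ k, ((w k : ℕ) : ℝ)) ^ 2)⁻¹ := by
  refine Metric.ediam_le_of_forall_dist_le ?_
  rintro _ ⟨a, ha, rfl⟩ _ ⟨b, hb, rfl⟩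
  rw [Real.dist_eq, ← prod_range_eq_of_mem_cfCylinder ha]
  exact abs_cfVal_sub_le fun k hk => (ha ⟨k, hk⟩).trans (hb ⟨k, hk⟩).symm

/-- `2 log a_k` stands in for the Lyapunov term `log |T'(T^k x)|`, which lies between `2 log a_k`
and `2 log (a_k + 1)`. -/
def lyapunovSet (lam : ℝ) (N : ℕ) : Set (ℕ → ℕ+) :=
  {a | ∀ n ≥ N, lam * n ≤ ∑ k ∈ Finset.range n, 2 * Real.log ((a k : ℕ) : ℝ)}

lemma exp_le_prod_sq_of_mem {lam : ℝ} {N n : ℕ} {w : Fin n → ℕ+} {a : ℕ → ℕ+} (hn : N ≤ n)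
    (ha : a ∈ cfCylinder n w ∩ lyapunovSet lam N) :
    Real.exp (lam * n) ≤ (∏ k, ((w k : ℕ) : ℝ)) ^ 2 := by
  rw [← prod_range_eq_of_mem_cfCylinder ha.1, ← Finset.prod_pow]
  calc Real.exp (lam * n)
      ≤ Real.exp (∑ k ∈ Finset.range n, 2 * Real.log ((a k : ℕ) : ℝ)) :=
        Real.exp_le_exp.2 (ha.2 n hn)
    _ = _ := by
      rw [Real.exp_sum]
      refine Finset.prod_congr rfl fun k _ => ?_
      rw [← Nat.cast_ofNat, ← Real.log_pow, Real.exp_log (by positivity)]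

lemma inv_sq_rpow_le {P c s s₀ : ℝ} (hP : 0 < P) (hc : Real.exp c ≤ P ^ 2) (hs : s₀ ≤ s) :
    ((P ^ 2)⁻¹) ^ s ≤ Real.exp (-(c * (s - s₀))) * (P ^ (2 * s₀))⁻¹ := by
  have hsplit : ((P ^ 2)⁻¹) ^ s = ((P ^ 2) ^ (s - s₀))⁻¹ * (P ^ (2 * s₀))⁻¹ := by
    rw [Real.inv_rpow (by positivity), ← mul_inv, ← Real.rpow_natCast, ← Real.rpow_mul hP.le,
      ← Real.rpow_mul hP.le, ← Real.rpow_add hP]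
    ring_nf
  rw [hsplit, Real.exp_neg, Real.exp_mul]
  gcongr

lemma ediam_image_cfCylinder_inter_rpow_le {lam s s₀ : ℝ} {N n : ℕ} (w : Fin n → ℕ+)
    (hn : N ≤ n) (hs : 0 < s) (hs₀ : s₀ ≤ s) :
    Metric.ediam (cfVal '' (cfCylinder n w ∩ lyapunovSet lam N)) ^ s ≤
      ENNReal.ofReal (Real.exp (-(lam * n * (s - s₀)))) *
        ∏ k, ENNReal.ofReal ((((w k : ℕ) : ℝ) ^ (2 * s₀))⁻¹) := by
  rcases Set.eq_empty_or_nonempty (cfCylinder n w ∩ lyapunovSet lam N) with he | ⟨a, ha⟩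
  · simp [he, ENNReal.zero_rpow_of_pos hs]
  have hP : 0 < ∏ k, ((w k : ℕ) : ℝ) := by positivity
  calc Metric.ediam (cfVal '' (cfCylinder n w ∩ lyapunovSet lam N)) ^ s
      ≤ ENNReal.ofReal ((∏ k, ((w k : ℕ) : ℝ)) ^ 2)⁻¹ ^ s := by
        gcongr
        exact (Metric.ediam_mono (image_mono inter_subset_left)).trans
          (ediam_image_cfCylinder_le n w)
    _ ≤ ENNReal.ofReal (Real.exp (-(lam * n * (s - s₀))) *
          ((∏ k, ((w k : ℕ) : ℝ)) ^ (2 * s₀))⁻¹) := by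
        rw [ENNReal.ofReal_rpow_of_pos (by positivity)]
        exact ENNReal.ofReal_le_ofReal (inv_sq_rpow_le hP (exp_le_prod_sq_of_mem hn ha) hs₀)
    _ = _ := by
      rw [ENNReal.ofReal_mul (Real.exp_pos _).le, ← Real.finsetProd_rpow _ _
        (fun k _ => by positivity), ← Finset.prod_inv_distrib,
        ENNReal.ofReal_prod_of_nonneg (fun k _ => by positivity)]

lemma ENNReal.tsum_pi_fin_prod {α : Type*} :
    ∀ (n : ℕ) (f : Fin n → α → ℝ≥0∞), ∑' w : Fin n → α, ∏ k, f k (w k) = ∏ k, ∑' x, f k x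
  | 0, f => by simp
  | n + 1, f => by
    rw [← (Fin.consEquiv fun _ : Fin (n + 1) => α).tsum_eq, ENNReal.tsum_prod',
      Fin.prod_univ_succ, ← tsum_pi_fin_prod n, ← ENNReal.tsum_mul_right]
    refine tsum_congr fun x => ?_
    rw [← ENNReal.tsum_mul_left]
    simp [Fin.consEquiv, Fin.prod_univ_succ]

theorem hausdorffMeasure_image_lyapunovSet_eq_zero {s₀ lam s : ℝ} (hs₀ : 1 / 2 < s₀)
    (hlam : 0 < lam) (hs : s₀ + kappa s₀ / lam < s) (N : ℕ) :
    μH[s] (cfVal '' lyapunovSet lam N) = 0 := by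
  have hss₀ : s₀ ≤ s := by linarith [div_nonneg (kappa_nonneg hs₀) hlam.le]
  have hs_pos : 0 < s := by linarith
  set t : ∀ n : ℕ, (Fin n → ℕ+) → Set ℝ := fun n w => cfVal '' (cfCylinder n w ∩ lyapunovSet lam N)
  set ρ := Real.exp (kappa s₀ - lam * (s - s₀))
  have hρ : ρ < 1 := by
    have := (div_lt_iff₀ hlam).1 (by linarith : kappa s₀ / lam < s - s₀)
    rw [Real.exp_lt_one_iff]
    linarith
  have hcover : ∀ n, cfVal '' lyapunovSet lam N ⊆ ⋃ w, t n w := by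
    rintro n _ ⟨a, ha, rfl⟩
    exact mem_iUnion.2 ⟨fun k => a k, mem_image_of_mem _ ⟨fun k => rfl, ha⟩⟩
  have hdiam : ∀ n ≥ N, ∀ w, Metric.ediam (t n w) ≤ ENNReal.ofReal (Real.exp (-(lam * n))) := by
    intro n hn w
    rcases eq_empty_or_nonempty (cfCylinder n w ∩ lyapunovSet lam N) with he | ⟨a, ha⟩
    · simp [t, he]
    refine (Metric.ediam_mono (image_mono inter_subset_left)).trans
      ((ediam_image_cfCylinder_le n w).trans (ENNReal.ofReal_le_ofReal ?_))
    rw [Real.exp_neg]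
    exact inv_anti₀ (Real.exp_pos _) (exp_le_prod_sq_of_mem hn ha)
  have hsum : ∀ n ≥ N, ∑' w, Metric.ediam (t n w) ^ s ≤ ENNReal.ofReal ρ ^ n := by
    intro n hn
    calc ∑' w, Metric.ediam (t n w) ^ s
        ≤ ∑' w : Fin n → ℕ+, ENNReal.ofReal (Real.exp (-(lam * n * (s - s₀)))) *
            ∏ k, ENNReal.ofReal ((((w k : ℕ) : ℝ) ^ (2 * s₀))⁻¹) :=
          ENNReal.tsum_le_tsum fun w => ediam_image_cfCylinder_inter_rpow_le w hn hs_pos hss₀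
      _ = ENNReal.ofReal (Real.exp (-(lam * n * (s - s₀)))) *
            (∑' x : ℕ+, ENNReal.ofReal ((((x : ℕ) : ℝ) ^ (2 * s₀))⁻¹)) ^ n := by
          rw [ENNReal.tsum_mul_left, ENNReal.tsum_pi_fin_prod n fun _ (x : ℕ+) =>
            ENNReal.ofReal ((((x : ℕ) : ℝ) ^ (2 * s₀))⁻¹), Finset.prod_const,
            Finset.card_univ, Fintype.card_fin]
      _ ≤ ENNReal.ofReal (Real.exp (-(lam * n * (s - s₀)))) *
            ENNReal.ofReal (Real.exp (kappa s₀)) ^ n := by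
          rw [← ENNReal.ofReal_tsum_of_nonneg (fun _ => by positivity)
            (summable_inv_rpow_pnat hs₀)]
          gcongr
          exact tsum_inv_rpow_le_exp_kappa hs₀
      _ = ENNReal.ofReal ρ ^ n := by
          rw [← ENNReal.ofReal_pow (Real.exp_pos _).le, ← ENNReal.ofReal_mul (Real.exp_pos _).le,
            ← ENNReal.ofReal_pow (Real.exp_pos _).le, ← Real.exp_nat_mul, ← Real.exp_add,
            ← Real.exp_nat_mul]
          congr 2
          ring
  have hr : Tendsto (fun n : ℕ => ENNReal.ofReal (Real.exp (-(lam * n)))) atTop (𝓝 0) := by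
    simpa using ENNReal.tendsto_ofReal (Real.tendsto_exp_atBot.comp
      (tendsto_neg_atTop_atBot.comp (tendsto_natCast_atTop_atTop.const_mul_atTop hlam)))
  refine le_antisymm ?_ bot_le
  calc μH[s] (cfVal '' lyapunovSet lam N)
      ≤ liminf (fun n => ∑' w, Metric.ediam (t n w) ^ s) atTop :=
        Measure.hausdorffMeasure_le_liminf_tsum s _ _ hr t (eventually_atTop.2 ⟨N, hdiam⟩)
          (Eventually.of_forall hcover)
    _ ≤ liminf (fun n : ℕ => ENNReal.ofReal ρ ^ n) atTop :=
        liminf_le_liminf (eventually_atTop.2 ⟨N, hsum⟩)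
    _ = 0 := (ENNReal.tendsto_pow_atTop_nhds_zero_of_lt_one
        (ENNReal.ofReal_lt_one.2 hρ)).liminf_eq

theorem dimH_image_lyapunovSet_le {s₀ lam : ℝ} (hs₀ : 1 / 2 < s₀) (hlam : 0 < lam) (N : ℕ) :
    dimH (cfVal '' lyapunovSet lam N) ≤ ENNReal.ofReal (s₀ + kappa s₀ / lam) := by
  refine dimH_le fun d hd => le_of_not_gt fun hlt => ?_
  rw [← ENNReal.ofReal_coe_nnreal, ENNReal.ofReal_lt_ofReal_iff'] at hlt
  simp [hausdorffMeasure_image_lyapunovSet_eq_zero hs₀ hlam hlt.1 N] at hd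

section Digits

instance : DiscreteMeasurableSpace ℕ+ := ⟨fun _ => MeasurableSpace.measurableSet_top⟩

variable {p : ℕ+ → ℝ}

noncomputable def IsProbVec.toPMF (hp : IsProbVec p) : PMF ℕ+ :=
  ⟨fun n => ENNReal.ofReal (p n), by
    rw [ENNReal.summable.hasSum_iff, ← ENNReal.ofReal_tsum_of_nonneg hp.1 hp.2.summable,
      hp.2.tsum_eq, ENNReal.ofReal_one]⟩

lemma IsProbVec.toPMF_apply (hp : IsProbVec p) (n : ℕ+) :
    hp.toPMF n = ENNReal.ofReal (p n) := rfl

lemma IsProbVec.toMeasure_toPMF_singleton (hp : IsProbVec p) (n : ℕ+) :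
    hp.toPMF.toMeasure {n} = ENNReal.ofReal (p n) :=
  hp.toPMF.toMeasure_apply_singleton n (measurableSet_singleton n)

lemma IsProbVec.integral_toPMF (hp : IsProbVec p) {g : ℕ+ → ℝ}
    (hg : Integrable g hp.toPMF.toMeasure) :
    ∫ x, g x ∂hp.toPMF.toMeasure = ∑' x, p x * g x := by
  rw [PMF.integral_eq_tsum _ _ hg]
  exact tsum_congr fun x => by rw [smul_eq_mul, hp.toPMF_apply, ENNReal.toReal_ofReal (hp.1 x)]

variable {m : Measure (ℕ → ℕ+)}

lemma IsBernoulli.map_restrict_fin (hp : IsProbVec p) (hb : IsBernoulli p m) (n : ℕ) :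
    m.map (fun (a : ℕ → ℕ+) (k : Fin n) => a k) = Measure.pi fun _ => hp.toPMF.toMeasure := by
  refine Measure.ext_of_singleton fun w => ?_
  set i : ℕ → ℕ+ := fun j => if h : j < n then w ⟨j, h⟩ else 1
  have hpre : (fun (a : ℕ → ℕ+) (k : Fin n) => a k) ⁻¹' {w} = {a | ∀ k < n, a k = i k} := by
    ext a
    simp only [mem_preimage, mem_singleton_iff, funext_iff, mem_ofPred_eq, Fin.forall_iff, i]
    exact forall₂_congr fun k hk => by rw [dif_pos hk]
  rw [Measure.map_apply (by fun_prop) (measurableSet_singleton w), hpre, hb n i,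
    Measure.pi_singleton, ← Fin.prod_univ_eq_prod_range, ENNReal.ofReal_prod_of_nonneg
    fun _ _ => hp.1 _]
  exact Finset.prod_congr rfl fun k _ => by
    simp [i, hp.toMeasure_toPMF_singleton]

lemma IsBernoulli.eq_infinitePi (hp : IsProbVec p) (hb : IsBernoulli p m) :
    m = Measure.infinitePi fun _ => hp.toPMF.toMeasure := by
  classical
  refine Measure.eq_infinitePi _ fun s t ht => ?_
  obtain ⟨n, hn⟩ := s.exists_nat_subset_range
  set t' : Fin n → Set ℕ+ := fun k => if (k : ℕ) ∈ s then t k else univ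
  have hpre : (s : Set ℕ).pi t = (fun (a : ℕ → ℕ+) (k : Fin n) => a k) ⁻¹' univ.pi t' := by
    ext a
    simp only [Set.mem_pi, Finset.mem_coe, mem_preimage, Set.mem_univ, forall_const, t']
    refine ⟨fun h k => ?_, fun h k hk => by simpa [hk] using h ⟨k, Finset.mem_range.1 (hn hk)⟩⟩
    split_ifs with hk
    exacts [h k hk, mem_univ _]
  rw [hpre, ← Measure.map_apply (by fun_prop) (.univ_pi fun _ => .of_discrete),
    hb.map_restrict_fin hp, Measure.pi_pi, Fin.prod_univ_eq_prod_range
      (fun k => hp.toPMF.toMeasure (if k ∈ s then t k else univ))]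
  simp only [apply_ite hp.toPMF.toMeasure, measure_univ]
  rw [Finset.prod_ite_mem, Finset.inter_eq_right.2 hn]

end Digits

theorem ae_tendsto_average_infinitePi {α : Type*} [MeasurableSpace α] (P : Measure α)
    [IsProbabilityMeasure P] {g : α → ℝ} (hg : Measurable g) (hint : Integrable g P) :
    ∀ᵐ a ∂Measure.infinitePi (fun _ : ℕ => P),
      Tendsto (fun n : ℕ => (∑ i ∈ Finset.range n, g (a i)) / n) atTop (𝓝 (∫ x, g x ∂P)) := by
  have hP := measurePreserving_eval_infinitePi fun _ : ℕ => P
  set X : ℕ → (ℕ → α) → ℝ := fun i a => g (a i)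
  have hident : ∀ i, IdentDistrib (X i) (X 0)
      (Measure.infinitePi fun _ => P) (Measure.infinitePi fun _ => P) := fun i =>
    IdentDistrib.comp ⟨(hP i).measurable.aemeasurable, (hP 0).measurable.aemeasurable,
      by rw [(hP i).map_eq, (hP 0).map_eq]⟩ hg
  have hindep : Pairwise fun i j => IndepFun (X i) (X j) (Measure.infinitePi fun _ => P) :=
    fun i j hij => (iIndepFun_infinitePi (P := fun _ => P) fun _ => hg).indepFun hij
  have hint₀ : Integrable (X 0) (Measure.infinitePi fun _ => P) :=
    ((hP 0).integrable_comp hg.aestronglyMeasurable).2 hint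
  have hmean : ∫ a, X 0 a ∂(Measure.infinitePi fun _ : ℕ => P) = ∫ x, g x ∂P := by
    rw [← integral_map (hP 0).measurable.aemeasurable hg.aestronglyMeasurable, (hP 0).map_eq]
  rw [← hmean]
  exact strong_law_ae_real X hint₀ hindep hident

section Estimates

variable {p : ℕ+ → ℝ}

lemma sum_Icc_le_of_min_le (hp : ∀ n, 0 ≤ p n) (hmono : Antitone p) {ε : ℝ}
    (hmin : min (p 1) (p 2) ≤ ε) (M : ℕ+) :
    ∑ x ∈ Finset.Icc 1 M, p x ≤ p 1 + M * ε := by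
  have h2 : p 2 ≤ ε := by rwa [min_eq_right (hmono (by decide))] at hmin
  have hbound : ∀ x ∈ (Finset.Icc 1 M).erase 1, p x ≤ ε := fun x hx => by
    refine (hmono ?_).trans h2
    have hx1 : (x : ℕ) ≠ 1 := by simpa using (Finset.mem_erase.1 hx).1
    rw [← PNat.coe_le_coe, PNat.val_ofNat]
    have := x.pos
    omega
  have hcard : ((Finset.Icc 1 M).erase 1).card ≤ (M : ℕ) := by
    have := Finset.card_erase_le (s := Finset.Icc 1 M) (a := 1)
    rw [PNat.card_Icc, PNat.val_ofNat] at this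
    omega
  rw [← Finset.add_sum_erase _ p (Finset.mem_Icc.2 ⟨le_rfl, one_le⟩)]
  have hsum := Finset.sum_le_card_nsmul _ _ _ hbound
  rw [nsmul_eq_mul] at hsum
  have hε : 0 ≤ ε := (hp 2).trans h2
  have : (((Finset.Icc 1 M).erase 1).card : ℝ) * ε ≤ M * ε := by gcongr
  linarith

noncomputable def truncLog (M x : ℕ+) : ℝ := min (2 * Real.log x) (2 * Real.log M)

lemma truncLog_nonneg (M x : ℕ+) : 0 ≤ truncLog M x := by
  have := Real.log_nonneg (one_le_coe_pnat x)
  have := Real.log_nonneg (one_le_coe_pnat M)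
  exact le_min (by positivity) (by positivity)

lemma integrable_truncLog (μ : Measure ℕ+) [IsFiniteMeasure μ] (M : ℕ+) :
    Integrable (truncLog M) μ :=
  .of_bound Measurable.of_discrete.aestronglyMeasurable (2 * Real.log M) (ae_of_all _ fun x => by
    rw [Real.norm_of_nonneg (truncLog_nonneg M x)]
    exact min_le_right _ _)

lemma mul_one_sub_sum_Icc_le_tsum_truncLog (hp : IsProbVec p) (M : ℕ+) :
    2 * Real.log M * (1 - ∑ x ∈ Finset.Icc 1 M, p x) ≤ ∑' x, p x * truncLog M x := by
  set s := Finset.Icc 1 M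
  have hf : ∀ x, 0 ≤ p x * truncLog M x := fun x => mul_nonneg (hp.1 x) (truncLog_nonneg M x)
  have hsf : Summable fun x => p x * truncLog M x :=
    (hp.2.summable.mul_right (2 * Real.log M)).of_nonneg_of_le hf fun x =>
      mul_le_mul_of_nonneg_left (min_le_right _ _) (hp.1 x)
  have htail : ∀ x : ↑(s : Set ℕ+)ᶜ, p x * truncLog M x = p x * (2 * Real.log M) := fun x => by
    have hMx : M ≤ (x : ℕ+) := by
      have := x.2
      simp only [mem_compl_iff, Finset.coe_Icc, mem_Icc, not_and, not_le, s] at this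
      exact (this one_le).le
    rw [truncLog, min_eq_right (mul_le_mul_of_nonneg_left
      (Real.log_le_log (by positivity) (by exact_mod_cast hMx)) zero_le_two)]
  rw [← hsf.sum_add_tsum_compl (s := s), tsum_congr htail, tsum_mul_right,
    ← hp.2.tsum_eq, ← hp.2.summable.sum_add_tsum_compl (s := s)]
  have := Finset.sum_nonneg fun x (_ : x ∈ s) => hf x
  linarith

lemma lt_integral_truncLog (hp : IsProbVec p) (hmono : Antitone p) (hp1 : p 1 ≤ psi)
    {lam : ℝ} {M : ℕ+} (hM : lam < (1 - psi) * Real.log M)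
    (hmin : min (p 1) (p 2) ≤ (1 - psi) / (2 * M)) :
    lam < ∫ x, truncLog M x ∂hp.toPMF.toMeasure := by
  have hsum := sum_Icc_le_of_min_le hp.1 hmono hmin M
  have hMε : (M : ℝ) * ((1 - psi) / (2 * M)) = (1 - psi) / 2 := by field_simp
  have hlogM : 0 ≤ Real.log M := Real.log_nonneg (one_le_coe_pnat M)
  rw [hp.integral_toPMF (integrable_truncLog _ M)]
  refine hM.trans_le (le_trans ?_ (mul_one_sub_sum_Icc_le_tsum_truncLog hp M))
  nlinarith

end Estimates

lemma exists_pnat_lt_mul_log {c : ℝ} (hc : 0 < c) (b : ℝ) : ∃ M : ℕ+, b < c * Real.log M := by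
  obtain ⟨n, hn⟩ := exists_nat_gt (Real.exp (b / c))
  have hn0 : (0 : ℝ) < n := (Real.exp_pos _).trans hn
  refine ⟨⟨n, by exact_mod_cast hn0⟩, ?_⟩
  rw [← div_lt_iff₀' hc]
  exact (Real.lt_log_iff_exp_lt hn0).2 hn

lemma mem_iUnion_lyapunovSet_of_tendsto {lam E : ℝ} {g : ℕ+ → ℝ}
    (hg : ∀ x, g x ≤ 2 * Real.log ((x : ℕ) : ℝ)) {a : ℕ → ℕ+}
    (ha : Tendsto (fun n : ℕ => (∑ i ∈ Finset.range n, g (a i)) / n) atTop (𝓝 E))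
    (hE : lam < E) : a ∈ ⋃ N, lyapunovSet lam N := by
  obtain ⟨N, hN⟩ := eventually_atTop.1
    ((ha.eventually (lt_mem_nhds hE)).and (eventually_gt_atTop 0))
  refine mem_iUnion.2 ⟨N, fun n hn => ?_⟩
  obtain ⟨hlt, hpos⟩ := hN n hn
  rw [lt_div_iff₀ (by exact_mod_cast hpos)] at hlt
  exact hlt.le.trans (Finset.sum_le_sum fun i _ => hg _)

lemma dimMeasure_map_le {α : Type*} [MeasurableSpace α] {m : Measure α} [IsProbabilityMeasure m]
    {f : α → ℝ} (hf : AEMeasurable f m) {G : Set α} (hG : ∀ᵐ a ∂m, a ∈ G) :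
    dimMeasure (m.map f) ≤ dimH (f '' G) := by
  have := Measure.isProbabilityMeasure_map hf
  have hfull : m.map f (f '' G) = 1 := by
    refine le_antisymm prob_le_one ?_
    calc 1 = m G := by rw [measure_congr ((ae_eq_univ (μ := m) (s := G)).2 hG), measure_univ]
      _ ≤ m.map f (f '' G) := Measure.le_map_apply_image hf G
  exact iInf₂_le (f '' G) hfull

lemma psi_lt_one : psi < 1 := by
  have h5 : Real.sqrt 5 < 3 := by
    rw [Real.sqrt_lt' three_pos]
    norm_num
  rw [psi, Real.sqrt_lt' one_pos]
  linarith

theorem dim_bound_of_not_hyp_general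
    (s0 lam0 : ℝ) (hs0 : s0 ∈ Set.Ioo (1 / 2 : ℝ) 1) (hlam0 : 0 < lam0) :
    ∃ ε0 : ℝ, 0 < ε0 ∧
      ∀ (p : ℕ+ → ℝ) (m : Measure (ℕ → ℕ+)),
        IsProbVec p → IsProbabilityMeasure m → IsBernoulli p m →
        Antitone p →
        Summable (fun n : ℕ+ => p n * Real.log (p n)) →
        p 1 ≤ psi → min (p 1) (p 2) ≤ ε0 →
          dimMeasure (m.map cfVal) ≤ ENNReal.ofReal (s0 + kappa s0 / lam0) := by
  have hδ : 0 < 1 - psi := sub_pos.2 psi_lt_one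
  obtain ⟨M, hM⟩ := exists_pnat_lt_mul_log hδ lam0
  refine ⟨(1 - psi) / (2 * M), div_pos hδ (by positivity), ?_⟩
  intro p m hp _ hb hmono _ hp1 hmin
  obtain rfl := hb.eq_infinitePi hp
  have hae : ∀ᵐ a ∂Measure.infinitePi (fun _ => hp.toPMF.toMeasure),
      a ∈ ⋃ N, lyapunovSet lam0 N := by
    filter_upwards [ae_tendsto_average_infinitePi _ Measurable.of_discrete
      (integrable_truncLog _ M)] with a ha
    exact mem_iUnion_lyapunovSet_of_tendsto (fun x => min_le_left _ _) ha
      (lt_integral_truncLog hp hmono hp1 hM hmin)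
  calc dimMeasure _ ≤ dimH (cfVal '' ⋃ N, lyapunovSet lam0 N) :=
        dimMeasure_map_le measurable_cfVal.aemeasurable hae
    _ = ⨆ N, dimH (cfVal '' lyapunovSet lam0 N) := by rw [image_iUnion, dimH_iUnion]
    _ ≤ _ := iSup_le fun N => dimH_image_lyapunovSet_le hs0.1 hlam0 N

/-- Fix `1/2 < s₀ < 1` and `λ₀ > 0` with `s₀ + κ(s₀)/λ₀ < 1`.  Then there is `ε₀ > 0` such
that every probability vector `p` with decreasing entries and finite entropy which satisfies
`p₁ ≤ ψ` and `min(p₁, p₂) ≤ ε₀` has `dim μ_p ≤ s₀ + κ(s₀)/λ₀`. -/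
theorem dim_bound_of_not_hyp
    (s0 lam0 : ℝ) (hs0 : s0 ∈ Set.Ioo (1 / 2 : ℝ) 1) (hlam0 : 0 < lam0)
    (hlt : s0 + kappa s0 / lam0 < 1) :
    ∃ ε0 : ℝ, 0 < ε0 ∧
      ∀ (p : ℕ+ → ℝ) (m : Measure (ℕ → ℕ+)),
        IsProbVec p → IsProbabilityMeasure m → IsBernoulli p m →
        Antitone p →
        Summable (fun n : ℕ+ => p n * Real.log (p n)) →
        p 1 ≤ psi → min (p 1) (p 2) ≤ ε0 →
          dimMeasure (m.map cfVal) ≤ ENNReal.ofReal (s0 + kappa s0 / lam0) :=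
  dim_bound_of_not_hyp_general s0 lam0 hs0 hlam0
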